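/- For every infinite path ρ in a finite directed graph (every vertex having the edges of the graph), the set Inf(ρ) of vertices visited infinitely often induces a subgraph in which there is a cycle visiting exactly the vertices of Inf(ρ); consequently there exists an eventually periodic path ρ' starting at ρ(0) with Occ(ρ') ⊆ Occ(ρ) and Inf(ρ') = Inf(ρ). -/

import Mathlib

/-- Lasso compression: for an infinite path `ρ` in a finite directed graph in
which every vertex has a successor, there is a cycle visiting exactly the
vertices of `Inf ρ`, and an eventually periodic path `ρ'` starting at `ρ 0`
with `Occ ρ' ⊆ Occ ρ` and `Inf ρ' = Inf ρ`. -/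
theorem stmt_8 {V : Type*} [Fintype V] (E : V → V → Prop)
    (hsucc : ∀ v : V, ∃ w, E v w) (ρ : ℕ → V)
    (hρ : ∀ n, E (ρ n) (ρ (n + 1))) :
    (∃ (u : List V) (hu : u ≠ []), u.Chain' E ∧ E (u.getLast hu) (u.head hu) ∧
      {v | v ∈ u} = {v | {k | ρ k = v}.Infinite}) ∧
    (∃ ρ' : ℕ → V, (∀ n, E (ρ' n) (ρ' (n + 1))) ∧ ρ' 0 = ρ 0 ∧
      Set.range ρ' ⊆ Set.range ρ ∧
      {v | {k | ρ' k = v}.Infinite} = {v | {k | ρ k = v}.Infinite} ∧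
      ∃ N T : ℕ, 0 < T ∧ ∀ n, N ≤ n → ρ' (n + T) = ρ' n) := by
  classical
  set S : Set V := {v | {k | ρ k = v}.Infinite} with hSdef
  -- S is nonempty
  obtain ⟨v₀, hv₀⟩ : ∃ v, v ∈ S := by
    obtain ⟨v, hv⟩ := Finite.exists_infinite_fiber ρ
    refine ⟨v, ?_⟩
    have : (ρ ⁻¹' {v}).Infinite := Set.infinite_coe_iff.mp hv
    simpa [S, Set.preimage, Set.mem_singleton_iff] using this
  -- eventually all vertices are in S
  obtain ⟨N, hN⟩ : ∃ N, ∀ n, N ≤ n → ρ n ∈ S := by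
    have hfin : (⋃ v ∈ Sᶜ, {k | ρ k = v}).Finite := by
      apply Set.Finite.biUnion (Set.toFinite _)
      intro v hv
      simpa [S, Set.not_infinite] using hv
    obtain ⟨B, hB⟩ := hfin.bddAbove
    refine ⟨B + 1, fun n hn => ?_⟩
    by_contra h
    have hmem : n ∈ ⋃ v ∈ Sᶜ, {k | ρ k = v} := Set.mem_biUnion h rfl
    have := hB hmem
    omega
  -- pick a start index n₀ > N with ρ n₀ = v₀
  obtain ⟨n₀, hn₀v, hn₀N⟩ := hv₀.exists_gt N
  -- for each v ∈ S pick an occurrence beyond n₀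
  have hchoose : ∀ v : V, ∃ k, v ∈ S → n₀ < k ∧ ρ k = v := by
    intro v
    by_cases hv : v ∈ S
    · obtain ⟨k, hk, hk'⟩ := hv.exists_gt n₀
      exact ⟨k, fun _ => ⟨hk', hk⟩⟩
    · exact ⟨0, fun h => absurd h hv⟩
  choose idx hidx using hchoose
  set M := Finset.univ.sup idx with hMdef
  have hidxM : ∀ v : V, idx v ≤ M := fun v => Finset.le_sup (Finset.mem_univ v)
  -- pick m > M with ρ m = v₀
  obtain ⟨m, hmv, hmM⟩ := hv₀.exists_gt M
  have hn₀M : n₀ < M := lt_of_lt_of_le (hidx v₀ hv₀).1 (hidxM v₀)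
  have hn₀m : n₀ < m := lt_trans hn₀M hmM
  set T := m - n₀ with hTdef
  have hT : 0 < T := by omega
  have hloop : ρ (n₀ + T) = ρ n₀ := by
    have : n₀ + T = m := by omega
    rw [this, hmv, hn₀v]
  -- the cycle list
  set u : List V := (List.range T).map (fun i => ρ (n₀ + i)) with hudef
  have hulen : u.length = T := by simp [u]
  have hune : u ≠ [] := by
    intro h
    rw [h] at hulen
    simp at hulen
    omega
  have humem : ∀ v, v ∈ u ↔ v ∈ S := by
    intro v
    simp only [u, List.mem_map, List.mem_range]
    constructor
    · rintro ⟨i, hi, rfl⟩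
      exact hN (n₀ + i) (by omega)
    · intro hv
      have h1 := (hidx v hv).1
      have h2 := (hidx v hv).2
      have h3 := hidxM v
      refine ⟨idx v - n₀, by omega, ?_⟩
      rw [show n₀ + (idx v - n₀) = idx v by omega]
      exact h2
  constructor
  · refine ⟨u, hune, ?_, ?_, ?_⟩
    · rw [hudef, show List.Chain' E _ = List.IsChain E _ from rfl, List.isChain_map, show T = (T - 1) + 1 by omega,
        List.isChain_range_succ]
      intro i hi
      simpa [← add_assoc] using hρ (n₀ + i)
    · have hhead : u.head hune = ρ n₀ := by
        have : u.head? = some (ρ n₀) := by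
          rw [hudef, show T = (T - 1) + 1 by omega]
          simp [List.range_succ_eq_map]
        exact Option.some_injective _ ((List.head?_eq_head hune).symm.trans this)
      have hlast : u.getLast hune = ρ (n₀ + (T - 1)) := by
        rw [List.getLast_eq_getElem]
        simp [u, hulen]
      rw [hhead, hlast, ← hloop, show n₀ + T = (n₀ + (T - 1)) + 1 by omega]
      exact hρ _
    · ext v
      simpa using humem v
  · -- the eventually periodic path
    set f : ℕ → ℕ := fun n => if n < n₀ then n else n₀ + (n - n₀) % T with hfdef
    refine ⟨fun n => ρ (f n), ?_, ?_, ?_, ?_, n₀, T, hT, ?_⟩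
    · intro n
      by_cases h1 : n + 1 < n₀
      · simp only [hfdef, if_pos (show n < n₀ by omega), if_pos h1]
        exact hρ n
      by_cases h2 : n < n₀
      · have hn1 : n + 1 = n₀ := by omega
        simp only [hfdef, if_pos h2, if_neg (show ¬ n + 1 < n₀ by omega)]
        rw [show n + 1 - n₀ = 0 by omega, Nat.zero_mod, Nat.add_zero, ← hn1]
        exact hρ n
      · simp only [hfdef, if_neg (show ¬ n + 1 < n₀ by omega), if_neg h2]
        set r := (n - n₀) % T with hrdef
        have hrT : r < T := Nat.mod_lt _ hT
        have hstep : (n + 1 - n₀) % T = (r + 1) % T := by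
          rw [show n + 1 - n₀ = (n - n₀) + 1 by omega]
          exact (Nat.mod_modEq (n - n₀) T).symm.add_right 1
        rw [hstep]
        by_cases h3 : r + 1 < T
        · rw [Nat.mod_eq_of_lt h3]
          simpa [← add_assoc] using hρ (n₀ + r)
        · have h4 : r + 1 = T := by omega
          rw [h4, Nat.mod_self, Nat.add_zero, ← hloop,
            show n₀ + T = (n₀ + r) + 1 by omega]
          exact hρ (n₀ + r)
    · by_cases h0 : 0 < n₀
      · simp [hfdef, h0]
      · have : n₀ = 0 := by omega
        simp [hfdef, this]
    · rintro v ⟨n, rfl⟩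
      exact ⟨f n, rfl⟩
    · ext v
      simp only [Set.mem_setOf_eq]
      constructor
      · intro h
        obtain ⟨k, hk, hkgt⟩ := h.exists_gt n₀
        have : ρ (f k) = v := hk
        rw [hfdef] at this
        simp only [if_neg (show ¬ k < n₀ by omega)] at this
        rw [← this]
        exact hN _ (by omega)
      · intro hv
        have hvu : v ∈ u := (humem v).mpr hv
        rw [hudef] at hvu
        simp only [List.mem_map, List.mem_range] at hvu
        obtain ⟨i, hi, hiv⟩ := hvu
        apply Set.infinite_of_injective_forall_mem
          (f := fun j : ℕ => n₀ + i + j * T)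
        · intro a b hab
          simp only at hab
          have hab' : a * T = b * T := by omega
          exact Nat.eq_of_mul_eq_mul_right hT hab'
        · intro j
          simp only [Set.mem_setOf_eq, hfdef,
            if_neg (show ¬ n₀ + i + j * T < n₀ by omega)]
          rw [show n₀ + i + j * T - n₀ = i + j * T by omega,
            Nat.add_mul_mod_self_right, Nat.mod_eq_of_lt hi, hiv]
    · intro n hn
      simp only [hfdef, if_neg (show ¬ n + T < n₀ by omega),
        if_neg (show ¬ n < n₀ by omega)]
      rw [show n + T - n₀ = (n - n₀) + T by omega, Nat.add_mod_right]
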